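/- Let (α,θ_α): X/G → Y/H and (β,θ_β): X/G → Y'/H both be stab-surjective 1-cells, and let ε: X → H be a map satisfying ε_{g•x}·θ_{α,x}(g)·ε_x⁻¹ = θ_{β,x}(g) for all x ∈ X and g ∈ G. Then the unique H-equivariant map ω: Y → Y' with ω(α(x)) = ε_x⁻¹•β(x) for all x ∈ X is a bijection, i.e. an isomorphism of H-sets. In particular, the target of a stab-surjective 1-cell out of X/G with prescribed acting part is determined up to H-equivariant isomorphism. -/

import Mathlib

/-!
A stab-surjective 1-cell `(α, θ) : X/G → Y/H` presents `Y` as the image of `(h, x) ↦ h • α x`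
on `H × X`, and its fibres are exactly the pairs related through `θ`. Twisting by
`(h, x) ↦ (h * (ε x)⁻¹, x)` turns `θα`-related pairs into `θβ`-related pairs and back, so the
presentations of `Y` and `Y'` have the same fibres and `ω` is the induced bijection. Since every
point of `Y` is of the form `h • α x`, `ω` is equivariant and unique.
-/

theorem Function.Surjective.exists_injective_comp_eq {A B C : Type*} {f : A → B} {F : A → C}
    (hf : Function.Surjective f) (hF : ∀ a b, F a = F b ↔ f a = f b) :
    ∃ ω : B → C, Function.Injective ω ∧ ω ∘ f = F := by
  refine ⟨F ∘ Function.surjInv hf, fun b b' hbb' => ?_, funext fun a => ?_⟩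
  · rw [← Function.surjInv_eq hf b, ← Function.surjInv_eq hf b']
    exact (hF _ _).1 hbb'
  · exact (hF _ _).2 (Function.surjInv_eq hf (f a))

namespace OneCell

variable {G H X Y : Type*} [Group G] [Group H] [MulAction G X] [MulAction H Y]

def Related (θ : X → G → H) (h : H) (x : X) (h' : H) (x' : X) : Prop :=
  ∃ g : G, x' = g • x ∧ h = h' * θ x g

structure IsStabSurjective (α : X → Y) (θ : X → G → H) : Prop where
  exists_eq_smul : ∀ y : Y, ∃ (x : X) (h : H), y = h • α x
  related_of_smul_eq : ∀ (x x' : X) (h h' : H), h • α x = h' • α x' → Related θ h x h' x'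

theorem Related.smul_eq {α : X → Y} {θ : X → G → H} (hα : ∀ x g, α (g • x) = θ x g • α x)
    {h h' : H} {x x' : X} : Related θ h x h' x' → h • α x = h' • α x' := by
  rintro ⟨g, rfl, rfl⟩
  rw [hα, mul_smul]

theorem related_twist_iff {θα θβ : X → G → H} {ε : X → H}
    (hε : ∀ x g, ε (g • x) * θα x g * (ε x)⁻¹ = θβ x g) {h h' : H} {x x' : X} :
    Related θβ (h * (ε x)⁻¹) x (h' * (ε x')⁻¹) x' ↔ Related θα h x h' x' := by
  refine exists_congr fun g => and_congr_right fun hx' => ?_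
  rw [← hε, hx', ← mul_assoc, mul_assoc h', mul_assoc h', inv_mul_cancel_left, ← mul_assoc,
    mul_left_inj]

namespace IsStabSurjective

variable {α : X → Y} {θ : X → G → H}

theorem surjective_smul (hs : IsStabSurjective α θ) :
    Function.Surjective fun p : H × X => p.1 • α p.2 := fun y => by
  obtain ⟨x, h, rfl⟩ := hs.exists_eq_smul y
  exact ⟨(h, x), rfl⟩

theorem smul_eq_smul_iff (hs : IsStabSurjective α θ) (hα : ∀ x g, α (g • x) = θ x g • α x)
    {h h' : H} {x x' : X} : h • α x = h' • α x' ↔ Related θ h x h' x' :=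
  ⟨hs.related_of_smul_eq x x' h h', Related.smul_eq hα⟩

end IsStabSurjective

theorem twist_smul_eq_twist_smul_iff {Y' : Type*} [MulAction H Y'] {α : X → Y} {β : X → Y'}
    {θα θβ : X → G → H} {ε : X → H}
    (sα : IsStabSurjective α θα) (hα : ∀ x g, α (g • x) = θα x g • α x)
    (sβ : IsStabSurjective β θβ) (hβ : ∀ x g, β (g • x) = θβ x g • β x)
    (hε : ∀ x g, ε (g • x) * θα x g * (ε x)⁻¹ = θβ x g) {h h' : H} {x x' : X} :
    (h * (ε x)⁻¹) • β x = (h' * (ε x')⁻¹) • β x' ↔ h • α x = h' • α x' := by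
  rw [sβ.smul_eq_smul_iff hβ, related_twist_iff hε, sα.smul_eq_smul_iff hα]

end OneCell

open OneCell in
theorem stab_surjective_target_unique_general
    (G H : Type*) [Group G] [Group H]
    (X Y Y' : Type*)
    [MulAction G X] [MulAction H Y] [MulAction H Y']
    (α : X → Y) (θα : X → G → H)
    (hα1 : ∀ (x : X) (g : G), α (g • x) = θα x g • α x)
    (β : X → Y') (θβ : X → G → H)
    (hβ1 : ∀ (x : X) (g : G), β (g • x) = θβ x g • β x)
    (hssα1 : ∀ y : Y, ∃ (x : X) (h : H), y = h • α x)
    (hssα2 : ∀ (x x' : X) (h h' : H), h • α x = h' • α x' →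
      ∃ g : G, x' = g • x ∧ h = h' * θα x g)
    (hssβ1 : ∀ y' : Y', ∃ (x : X) (h : H), y' = h • β x)
    (hssβ2 : ∀ (x x' : X) (h h' : H), h • β x = h' • β x' →
      ∃ g : G, x' = g • x ∧ h = h' * θβ x g)
    (ε : X → H)
    (hε : ∀ (x : X) (g : G), ε (g • x) * θα x g * (ε x)⁻¹ = θβ x g) :
    ∃ ω : Y → Y',
      ((∀ (h : H) (y : Y), ω (h • y) = h • ω y) ∧
        (∀ x : X, ω (α x) = (ε x)⁻¹ • β x)) ∧
      Function.Bijective ω ∧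
      (∀ ω' : Y → Y',
        ((∀ (h : H) (y : Y), ω' (h • y) = h • ω' y) ∧
          (∀ x : X, ω' (α x) = (ε x)⁻¹ • β x)) → ω' = ω) := by
  have sα : IsStabSurjective α θα := ⟨hssα1, hssα2⟩
  have sβ : IsStabSurjective β θβ := ⟨hssβ1, hssβ2⟩
  obtain ⟨ω, hinj, hω⟩ := sα.surjective_smul.exists_injective_comp_eq
    fun _ _ => twist_smul_eq_twist_smul_iff sα hα1 sβ hβ1 hε
  have hω_smul : ∀ h x, ω (h • α x) = (h * (ε x)⁻¹) • β x := fun h x => congrFun hω (h, x)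
  have hω_equivariant : ∀ (h : H) (y : Y), ω (h • y) = h • ω y := by
    intro h y
    obtain ⟨x, h', rfl⟩ := hssα1 y
    rw [smul_smul, hω_smul, hω_smul, smul_smul, mul_assoc]
  refine ⟨ω, ⟨hω_equivariant, fun x => by simpa using hω_smul 1 x⟩, ⟨hinj, fun y' => ?_⟩, ?_⟩
  · obtain ⟨x, h, rfl⟩ := hssβ1 y'
    exact ⟨(h * ε x) • α x, by rw [hω_smul, mul_inv_cancel_right]⟩
  · rintro ω' ⟨hω'_equivariant, hω'_α⟩
    funext y
    obtain ⟨x, h, rfl⟩ := hssα1 y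
    rw [hω'_equivariant, hω'_α, hω_smul, smul_smul]

/-- If both (α,θα) : X/G → Y/H and (β,θβ) : X/G → Y'/H are stab-surjective
1-cells with acting parts identified by ε, then the unique H-equivariant map
ω : Y → Y' with ω(α(x)) = ε(x)⁻¹ • β(x) is a bijection (an isomorphism of
H-sets); thus the target of a stab-surjective 1-cell with prescribed acting
part is unique up to H-equivariant isomorphism. -/
theorem stab_surjective_target_unique
    (G H : Type*) [Group G] [Group H] [Finite G] [Finite H]
    (X Y Y' : Type*) [Finite X] [Finite Y] [Finite Y']
    [MulAction G X] [MulAction H Y] [MulAction H Y']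
    (α : X → Y) (θα : X → G → H)
    (hα1 : ∀ (x : X) (g : G), α (g • x) = θα x g • α x)
    (hα2 : ∀ (x : X) (g g' : G), θα x (g * g') = θα (g' • x) g * θα x g')
    (β : X → Y') (θβ : X → G → H)
    (hβ1 : ∀ (x : X) (g : G), β (g • x) = θβ x g • β x)
    (hβ2 : ∀ (x : X) (g g' : G), θβ x (g * g') = θβ (g' • x) g * θβ x g')
    (hssα1 : ∀ y : Y, ∃ (x : X) (h : H), y = h • α x)
    (hssα2 : ∀ (x x' : X) (h h' : H), h • α x = h' • α x' →
      ∃ g : G, x' = g • x ∧ h = h' * θα x g)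
    (hssβ1 : ∀ y' : Y', ∃ (x : X) (h : H), y' = h • β x)
    (hssβ2 : ∀ (x x' : X) (h h' : H), h • β x = h' • β x' →
      ∃ g : G, x' = g • x ∧ h = h' * θβ x g)
    (ε : X → H)
    (hε : ∀ (x : X) (g : G), ε (g • x) * θα x g * (ε x)⁻¹ = θβ x g) :
    ∃ ω : Y → Y',
      ((∀ (h : H) (y : Y), ω (h • y) = h • ω y) ∧
        (∀ x : X, ω (α x) = (ε x)⁻¹ • β x)) ∧
      Function.Bijective ω ∧
      (∀ ω' : Y → Y',
        ((∀ (h : H) (y : Y), ω' (h • y) = h • ω' y) ∧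
          (∀ x : X, ω' (α x) = (ε x)⁻¹ • β x)) → ω' = ω) :=
  stab_surjective_target_unique_general G H X Y Y' α θα hα1 β θβ hβ1 hssα1 hssα2 hssβ1 hssβ2 ε hε
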